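/- On a 3-dimensional manifold, a contact circle is taut if and only if it is round. -/

import Mathlib

open scoped BigOperators

noncomputable section

abbrev E3 : Type := Fin 3 → ℝ

/-- Exterior derivative of a 1-form on ℝ³, evaluated at `x` on `u, v`. -/
def extd (ω : E3 → E3 →L[ℝ] ℝ) (x u v : E3) : ℝ :=
  fderiv ℝ (fun y => ω y v) x u - fderiv ℝ (fun y => ω y u) x v

/-- Evaluation of the 3-form `a ∧ b` (degrees 1, 2) on three vectors. -/
def wedge12 (a : E3 →L[ℝ] ℝ) (b : E3 → E3 → ℝ) (v : Fin 3 → E3) : ℝ :=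
  (1 / 2 : ℝ) * ∑ σ : Equiv.Perm (Fin 3),
    ((Equiv.Perm.sign σ : ℤ) : ℝ) * a (v (σ 0)) * b (v (σ 1)) (v (σ 2))

/-! ### Auxiliary material -/

/-- The explicit 3-form `a ∧ b` on three vectors. -/
def W3 (a : E3 →L[ℝ] ℝ) (b : E3 → E3 → ℝ) (u v w : E3) : ℝ :=
  a u * b v w - a v * b u w + a w * b u v

def ee (i : Fin 3) : E3 := Pi.single i 1

def D3 (u v w : E3) : ℝ :=
  u 0 * (v 1 * w 2 - v 2 * w 1) - u 1 * (v 0 * w 2 - v 2 * w 0) + u 2 * (v 0 * w 1 - v 1 * w 0)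

lemma wedge12_W3 (a : E3 →L[ℝ] ℝ) (b : E3 → E3 → ℝ)
    (hb : ∀ u v, b u v = - b v u) (v : Fin 3 → E3) :
    wedge12 a b v = W3 a b (v 0) (v 1) (v 2) := by
  have huniv : (Finset.univ : Finset (Equiv.Perm (Fin 3))) =
    insert 1 (insert (Equiv.swap 0 1) (insert (Equiv.swap 0 2) (insert (Equiv.swap 1 2)
       (insert (Equiv.swap 0 1 * Equiv.swap 1 2) {Equiv.swap 0 2 * Equiv.swap 1 2})))) := by
    decide
  rw [wedge12, huniv, W3]
  rw [Finset.sum_insert (by decide), Finset.sum_insert (by decide), Finset.sum_insert (by decide),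
      Finset.sum_insert (by decide), Finset.sum_insert (by decide), Finset.sum_singleton]
  norm_num [Equiv.Perm.sign_swap, Equiv.Perm.sign_mul]
  simp only [show (Equiv.swap (0:Fin 3) 1) 2 = 2 from by decide,
    show (Equiv.swap (0:Fin 3) 2) 1 = 1 from by decide,
    show (Equiv.swap (1:Fin 3) 2) 0 = 0 from by decide,
    show (Equiv.swap (0:Fin 3) 1) 0 = 1 from by decide,
    show (Equiv.swap (0:Fin 3) 2) 0 = 2 from by decide]
  norm_num [show (1:Fin 3) ≠ 2 from by decide, show (0:Fin 3) ≠ 2 from by decide]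
  rw [hb (v 2) (v 1), hb (v 2) (v 0), hb (v 1) (v 0)]
  ring

lemma fderiv_eval (ω : E3 → E3 →L[ℝ] ℝ) (hω : ContDiff ℝ (⊤ : ℕ∞) ω) (x u v : E3) :
    fderiv ℝ (fun y => ω y v) x u = fderiv ℝ ω x u v := by
  have hd : DifferentiableAt ℝ ω x := (hω.differentiable (by simp)).differentiableAt
  rw [fderiv_clm_apply hd (differentiableAt_const v)]
  simp

lemma extd_eq (ω : E3 → E3 →L[ℝ] ℝ) (hω : ContDiff ℝ (⊤ : ℕ∞) ω) (x u v : E3) :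
    extd ω x u v = fderiv ℝ ω x u v - fderiv ℝ ω x v u := by
  rw [extd, fderiv_eval ω hω, fderiv_eval ω hω]

lemma extd_skew (ω : E3 → E3 →L[ℝ] ℝ) (x u v : E3) :
    extd ω x u v = - extd ω x v u := by
  simp [extd]

lemma extd_self (ω : E3 → E3 →L[ℝ] ℝ) (x u : E3) : extd ω x u u = 0 := by
  have := extd_skew ω x u u; linarith

lemma extd_add_left (ω : E3 → E3 →L[ℝ] ℝ) (hω : ContDiff ℝ (⊤ : ℕ∞) ω) (x u u' v : E3) :
    extd ω x (u + u') v = extd ω x u v + extd ω x u' v := by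
  simp only [extd_eq ω hω, map_add, ContinuousLinearMap.add_apply]
  ring

lemma extd_smul_left (ω : E3 → E3 →L[ℝ] ℝ) (hω : ContDiff ℝ (⊤ : ℕ∞) ω) (c : ℝ) (x u v : E3) :
    extd ω x (c • u) v = c * extd ω x u v := by
  simp only [extd_eq ω hω, map_smul, ContinuousLinearMap.smul_apply, smul_eq_mul]
  ring

lemma extd_comb (ω₁ ω₂ : E3 → E3 →L[ℝ] ℝ) (h₁ : ContDiff ℝ (⊤ : ℕ∞) ω₁) (h₂ : ContDiff ℝ (⊤ : ℕ∞) ω₂)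
    (l₁ l₂ : ℝ) (x u v : E3) :
    extd (fun y => l₁ • ω₁ y + l₂ • ω₂ y) x u v
      = l₁ * extd ω₁ x u v + l₂ * extd ω₂ x u v := by
  have hc : ContDiff ℝ (⊤ : ℕ∞) (fun y => l₁ • ω₁ y + l₂ • ω₂ y) :=
    (h₁.const_smul l₁).add (h₂.const_smul l₂)
  have hd₁ : DifferentiableAt ℝ ω₁ x := (h₁.differentiable (by simp)).differentiableAt
  have hd₂ : DifferentiableAt ℝ ω₂ x := (h₂.differentiable (by simp)).differentiableAt
  have hf : fderiv ℝ (fun y => l₁ • ω₁ y + l₂ • ω₂ y) x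
      = l₁ • fderiv ℝ ω₁ x + l₂ • fderiv ℝ ω₂ x := by
    rw [fderiv_fun_add (f := fun y => l₁ • ω₁ y) (g := fun y => l₂ • ω₂ y)
        (hd₁.const_smul l₁) (hd₂.const_smul l₂), fderiv_fun_const_smul hd₁,
      fderiv_fun_const_smul hd₂]
  rw [extd_eq _ hc, extd_eq _ h₁, extd_eq _ h₂, hf]
  simp
  ring

lemma vec_decomp (u : E3) : u = u 0 • ee 0 + u 1 • ee 1 + u 2 • ee 2 := by
  funext i
  fin_cases i <;> simp [ee, Pi.single_apply]

lemma W3_eq (a : E3 →L[ℝ] ℝ) (b : E3 → E3 → ℝ)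
    (hskew : ∀ u v, b u v = - b v u)
    (hadd : ∀ u u' v, b (u + u') v = b u v + b u' v)
    (hsmul : ∀ (c : ℝ) u v, b (c • u) v = c * b u v)
    (u v w : E3) :
    W3 a b u v w
      = (a (ee 0) * b (ee 1) (ee 2) - a (ee 1) * b (ee 0) (ee 2)
          + a (ee 2) * b (ee 0) (ee 1)) * D3 u v w := by
  have hadd' : ∀ u v v', b u (v + v') = b u v + b u v' := by
    intro p q q'; rw [hskew, hadd, hskew q p, hskew q' p]; ring
  have hsmul' : ∀ (c : ℝ) u v, b u (c • v) = c * b u v := by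
    intro c p q; rw [hskew, hsmul, hskew q p]; ring
  have hzero : ∀ p, b p p = 0 := by
    intro p; have := hskew p p; linarith
  have ha : ∀ p : E3, a p = p 0 * a (ee 0) + p 1 * a (ee 1) + p 2 * a (ee 2) := by
    intro p
    conv_lhs => rw [vec_decomp p]
    simp [smul_eq_mul]
  have hb : ∀ p q : E3, b p q
      = (p 0 * q 1 - p 1 * q 0) * b (ee 0) (ee 1)
        + (p 0 * q 2 - p 2 * q 0) * b (ee 0) (ee 2)
        + (p 1 * q 2 - p 2 * q 1) * b (ee 1) (ee 2) := by
    intro p q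
    conv_lhs => rw [vec_decomp p, vec_decomp q]
    rw [hadd, hadd, hsmul, hsmul, hsmul]
    rw [hadd', hadd', hadd', hadd', hadd', hadd']
    simp only [hsmul']
    rw [hzero, hzero, hzero, hskew (ee 1) (ee 0), hskew (ee 2) (ee 0), hskew (ee 2) (ee 1)]
    ring
  rw [W3, ha u, ha v, ha w, hb u v, hb u w, hb v w, D3]
  ring

lemma exists_D3_ne (r s : E3) (hr : r ≠ 0) (hns : ∀ t : ℝ, s ≠ t • r) :
    ∃ w, D3 r s w ≠ 0 := by
  by_contra hc
  push_neg at hc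
  have c0 : r 1 * s 2 - r 2 * s 1 = 0 := by
    have := hc (ee 0); simp [D3, ee, Pi.single_apply] at this; linarith
  have c1 : r 2 * s 0 - r 0 * s 2 = 0 := by
    have := hc (ee 1); simp [D3, ee, Pi.single_apply] at this; linarith
  have c2 : r 0 * s 1 - r 1 * s 0 = 0 := by
    have := hc (ee 2); simp [D3, ee, Pi.single_apply] at this; linarith
  have hi : r 0 ≠ 0 ∨ r 1 ≠ 0 ∨ r 2 ≠ 0 := by
    by_contra h
    push_neg at h
    exact hr (by funext i; fin_cases i <;> simp [h.1, h.2.1, h.2.2])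
  rcases hi with h | h | h
  · refine hns (s 0 / r 0) ?_
    funext i
    fin_cases i
    · show s 0 = (s 0 / r 0) * r 0
      field_simp
    · show s 1 = (s 0 / r 0) * r 1
      field_simp
      linear_combination c2
    · show s 2 = (s 0 / r 0) * r 2
      field_simp
      linear_combination - c1
  · refine hns (s 1 / r 1) ?_
    funext i
    fin_cases i
    · show s 0 = (s 1 / r 1) * r 0
      field_simp
      linear_combination - c2
    · show s 1 = (s 1 / r 1) * r 1
      field_simp
    · show s 2 = (s 1 / r 1) * r 2
      field_simp
      linear_combination c0
  · refine hns (s 2 / r 2) ?_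
    funext i
    fin_cases i
    · show s 0 = (s 2 / r 2) * r 0
      field_simp
      linear_combination c1
    · show s 1 = (s 2 / r 2) * r 1
      field_simp
      linear_combination - c0
    · show s 2 = (s 2 / r 2) * r 2
      field_simp

lemma key (ω₁ ω₂ : E3 → E3 →L[ℝ] ℝ) (h₁ : ContDiff ℝ (⊤ : ℕ∞) ω₁) (h₂ : ContDiff ℝ (⊤ : ℕ∞) ω₂)
    (l₁ l₂ : ℝ) (x : E3) (v : Fin 3 → E3) :
    wedge12 (l₁ • ω₁ x + l₂ • ω₂ x) (extd (fun y => l₁ • ω₁ y + l₂ • ω₂ y) x) v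
      = l₁ ^ 2 * W3 (ω₁ x) (extd ω₁ x) (v 0) (v 1) (v 2)
        + l₁ * l₂ * (W3 (ω₁ x) (extd ω₂ x) (v 0) (v 1) (v 2)
            + W3 (ω₂ x) (extd ω₁ x) (v 0) (v 1) (v 2))
        + l₂ ^ 2 * W3 (ω₂ x) (extd ω₂ x) (v 0) (v 1) (v 2) := by
  rw [wedge12_W3 _ _ (extd_skew _ x)]
  simp only [W3, ContinuousLinearMap.add_apply, ContinuousLinearMap.coe_smul', Pi.smul_apply,
    smul_eq_mul, extd_comb ω₁ ω₂ h₁ h₂ l₁ l₂ x]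
  ring

/-- On a 3-dimensional manifold, a contact circle is taut if and only if it is
round.  (`ω₁, ω₂` smooth 1-forms generating a contact circle, with Reeb fields
`R₁, R₂`.  Taut: every normalized combination induces the same volume form.
Round: the Reeb field of `λ₁ω₁ + λ₂ω₂` is `λ₁R₁ + λ₂R₂`.) -/
theorem stmt8 (ω₁ ω₂ : E3 → E3 →L[ℝ] ℝ)
    (h₁ : ContDiff ℝ (⊤ : ℕ∞) ω₁) (h₂ : ContDiff ℝ (⊤ : ℕ∞) ω₂)
    (R₁ R₂ : E3 → E3)
    (hR₁ : ∀ x, ω₁ x (R₁ x) = 1 ∧ ∀ v, extd ω₁ x (R₁ x) v = 0)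
    (hR₂ : ∀ x, ω₂ x (R₂ x) = 1 ∧ ∀ v, extd ω₂ x (R₂ x) v = 0)
    (hcircle : ∀ l₁ l₂ : ℝ, l₁ ^ 2 + l₂ ^ 2 = 1 → ∀ x, ∃ v : Fin 3 → E3,
      wedge12 (l₁ • ω₁ x + l₂ • ω₂ x)
        (extd (fun y => l₁ • ω₁ y + l₂ • ω₂ y) x) v ≠ 0) :
    -- taut
    (∀ l₁ l₂ : ℝ, l₁ ^ 2 + l₂ ^ 2 = 1 → ∀ x (v : Fin 3 → E3),
        wedge12 (l₁ • ω₁ x + l₂ • ω₂ x)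
          (extd (fun y => l₁ • ω₁ y + l₂ • ω₂ y) x) v
        = wedge12 (ω₁ x) (extd ω₁ x) v)
    ↔
    -- round
    (∀ l₁ l₂ : ℝ, l₁ ^ 2 + l₂ ^ 2 = 1 → ∀ x,
        (l₁ • ω₁ x + l₂ • ω₂ x) (l₁ • R₁ x + l₂ • R₂ x) = 1 ∧
        ∀ v, extd (fun y => l₁ • ω₁ y + l₂ • ω₂ y) x
          (l₁ • R₁ x + l₂ • R₂ x) v = 0) := by
  have hsq : (Real.sqrt 2 / 2) ^ 2 = 1 / 2 := by
    rw [div_pow, Real.sq_sqrt (by norm_num : (2:ℝ) ≥ 0)]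
    norm_num
  have hnorm : (Real.sqrt 2 / 2) ^ 2 + (Real.sqrt 2 / 2) ^ 2 = 1 := by rw [hsq]; norm_num
  constructor
  · -- taut → round
    intro taut l₁ l₂ hl x
    obtain ⟨hα, hAr⟩ := hR₁ x
    obtain ⟨hβ, hBs⟩ := hR₂ x
    -- the two scalar taut identities
    have taut1 : ∀ u v w : E3, W3 (ω₂ x) (extd ω₂ x) u v w
        = W3 (ω₁ x) (extd ω₁ x) u v w := by
      intro u v w
      have t := taut 0 1 (by norm_num) x ![u, v, w]
      rw [key ω₁ ω₂ h₁ h₂ 0 1 x, wedge12_W3 _ _ (extd_skew _ x)] at t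
      norm_num [Matrix.cons_val_zero, Matrix.cons_val_one, Matrix.head_cons,
        Matrix.cons_val_two, Matrix.tail_cons] at t
      convert t using 2
    have taut2 : ∀ u v w : E3, W3 (ω₁ x) (extd ω₂ x) u v w
        + W3 (ω₂ x) (extd ω₁ x) u v w = 0 := by
      intro u v w
      have t := taut (Real.sqrt 2 / 2) (Real.sqrt 2 / 2) hnorm x ![u, v, w]
      rw [key ω₁ ω₂ h₁ h₂ _ _ x, wedge12_W3 _ _ (extd_skew _ x)] at t
      simp only [Matrix.cons_val_zero, Matrix.cons_val_one, Matrix.head_cons,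
        Matrix.cons_val_two, Matrix.tail_cons] at t
      have h11 := taut1 u v w
      linear_combination 2 * t
        - (2 * W3 (ω₁ x) (extd ω₁ x) u v w
            + 2 * (W3 (ω₁ x) (extd ω₂ x) u v w + W3 (ω₂ x) (extd ω₁ x) u v w)
            + 2 * W3 (ω₂ x) (extd ω₂ x) u v w) * hsq
        - h11
    -- auxiliary zero facts
    have hAsr : extd ω₁ x (R₂ x) (R₁ x) = 0 := by
      rw [extd_skew, hAr (R₂ x)]; ring
    have hBrr : extd ω₂ x (R₁ x) (R₁ x) = 0 := extd_self _ _ _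
    have hArr : extd ω₁ x (R₁ x) (R₁ x) = 0 := extd_self _ _ _
    have hAss : extd ω₁ x (R₂ x) (R₂ x) = 0 := extd_self _ _ _
    -- B(r,s) = 0
    have hBrs : extd ω₂ x (R₁ x) (R₂ x) = 0 := by
      have t := taut2 (R₁ x) (R₂ x) (R₁ x)
      simp only [W3] at t
      rw [hBs (R₁ x), hBrr, hAsr, hAr (R₁ x), hAr (R₂ x), hα] at t
      linarith
    -- round2 : B(r,v) + A(s,v) = 0
    have round2 : ∀ v, extd ω₂ x (R₁ x) v + extd ω₁ x (R₂ x) v = 0 := by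
      intro v
      have t := taut1 (R₁ x) (R₂ x) v
      simp only [W3] at t
      rw [hBs v, hBrs, hβ, hAr v, hAr (R₂ x), hα] at t
      linarith
    -- round1 : α(s) + β(r) = 0
    have round1 : ω₁ x (R₂ x) + ω₂ x (R₁ x) = 0 := by
      by_cases hAs : ∀ v, extd ω₁ x (R₂ x) v = 0
      · -- degenerate case: contradiction with nondegeneracy
        exfalso
        have hAB : ∀ u v, extd ω₁ x u v = -(ω₁ x (R₂ x)) * extd ω₂ x u v := by
          intro u v
          have t := taut2 (R₂ x) u v
          simp only [W3] at t
          rw [hBs v, hBs u, hβ, hAs v, hAs u] at t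
          linarith
        have hW0 : ∀ u v w, W3 (ω₁ x) (extd ω₁ x) u v w = 0 := by
          intro u v w
          have e1 : W3 (ω₁ x) (extd ω₁ x) u v w
              = -(ω₁ x (R₂ x)) * W3 (ω₁ x) (extd ω₂ x) u v w := by
            simp only [W3, hAB]; ring
          have e2 : W3 (ω₂ x) (extd ω₁ x) u v w
              = -(ω₁ x (R₂ x)) * W3 (ω₂ x) (extd ω₂ x) u v w := by
            simp only [W3, hAB]; ring
          have t2 := taut2 u v w
          have t1 := taut1 u v w
          have hfin : (1 + (ω₁ x (R₂ x)) ^ 2) * W3 (ω₁ x) (extd ω₁ x) u v w = 0 := by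
            linear_combination e1 - (ω₁ x (R₂ x)) * t2 + (ω₁ x (R₂ x)) * e2
              - (ω₁ x (R₂ x)) ^ 2 * t1
          have hne : (1 + (ω₁ x (R₂ x)) ^ 2) ≠ 0 := by positivity
          rcases mul_eq_zero.mp hfin with h | h
          · exact absurd h hne
          · exact h
        obtain ⟨v, hv⟩ := hcircle 1 0 (by norm_num) x
        apply hv
        rw [key ω₁ ω₂ h₁ h₂ 1 0 x]
        rw [hW0]
        ring
      · push_neg at hAs
        obtain ⟨v₀, hv₀⟩ := hAs
        have t := taut2 (R₁ x) (R₂ x) v₀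
        simp only [W3] at t
        rw [hBs v₀, hBrs, hAr v₀, hAr (R₂ x), hα, hβ] at t
        have hBrv : extd ω₂ x (R₁ x) v₀ = - extd ω₁ x (R₂ x) v₀ := by
          have := round2 v₀; linarith
        rw [hBrv] at t
        have t' : (ω₁ x (R₂ x) + ω₂ x (R₁ x)) * extd ω₁ x (R₂ x) v₀ = 0 := by linarith
        rcases mul_eq_zero.mp t' with h | h
        · exact h
        · exact absurd h hv₀
    constructor
    · simp only [ContinuousLinearMap.add_apply, ContinuousLinearMap.coe_smul', Pi.smul_apply,
        map_add, map_smul, smul_eq_mul]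
      linear_combination l₁ ^ 2 * hα + l₂ ^ 2 * hβ + l₁ * l₂ * round1 + hl
    · intro v
      rw [extd_comb ω₁ ω₂ h₁ h₂]
      have e1 : extd ω₁ x (l₁ • R₁ x + l₂ • R₂ x) v
          = l₁ * extd ω₁ x (R₁ x) v + l₂ * extd ω₁ x (R₂ x) v := by
        rw [extd_add_left ω₁ h₁, extd_smul_left ω₁ h₁, extd_smul_left ω₁ h₁]
      have e2 : extd ω₂ x (l₁ • R₁ x + l₂ • R₂ x) v
          = l₁ * extd ω₂ x (R₁ x) v + l₂ * extd ω₂ x (R₂ x) v := by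
        rw [extd_add_left ω₂ h₂, extd_smul_left ω₂ h₂, extd_smul_left ω₂ h₂]
      rw [e1, e2, hAr v, hBs v]
      have h2 := round2 v
      linear_combination (l₁ * l₂) * h2
  · -- round → taut
    intro round l₁ l₂ hl x v
    obtain ⟨hα, hAr⟩ := hR₁ x
    obtain ⟨hβ, hBs⟩ := hR₂ x
    obtain ⟨e1, e2⟩ := round (Real.sqrt 2 / 2) (Real.sqrt 2 / 2) hnorm x
    simp only [ContinuousLinearMap.add_apply, ContinuousLinearMap.coe_smul', Pi.smul_apply,
      map_add, map_smul, smul_eq_mul] at e1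
    rw [hα, hβ] at e1
    have round1 : ω₁ x (R₂ x) + ω₂ x (R₁ x) = 0 := by
      linear_combination 2 * e1 - (2 * (ω₁ x (R₂ x) + ω₂ x (R₁ x)) + 4) * hsq
    have round2 : ∀ w, extd ω₂ x (R₁ x) w + extd ω₁ x (R₂ x) w = 0 := by
      intro w
      have t := e2 w
      rw [extd_comb ω₁ ω₂ h₁ h₂] at t
      rw [extd_add_left ω₁ h₁, extd_smul_left ω₁ h₁, extd_smul_left ω₁ h₁,
        extd_add_left ω₂ h₂, extd_smul_left ω₂ h₂, extd_smul_left ω₂ h₂] at t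
      rw [hAr w, hBs w] at t
      linear_combination 2 * t
        - 2 * (extd ω₂ x (R₁ x) w + extd ω₁ x (R₂ x) w) * hsq
    have hAss : extd ω₁ x (R₂ x) (R₂ x) = 0 := extd_self _ _ _
    have hBrs : extd ω₂ x (R₁ x) (R₂ x) = 0 := by
      have := round2 (R₂ x); rw [hAss] at this; linarith
    -- r ≠ 0 and r, s not collinear
    have hr0 : R₁ x ≠ 0 := by
      intro h0
      rw [h0] at hα
      simp at hα
    have hns : ∀ t : ℝ, R₂ x ≠ t • R₁ x := by
      intro t hst
      have hαs : ω₁ x (R₂ x) = t := by rw [hst, map_smul, smul_eq_mul, hα]; ring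
      have hβs : (1:ℝ) = t * ω₂ x (R₁ x) := by
        rw [← hβ, hst, map_smul, smul_eq_mul]
      have hβr : ω₂ x (R₁ x) = -t := by rw [← hαs]; linarith [round1]
      rw [hβr] at hβs
      nlinarith [hβs, sq_nonneg t]
    obtain ⟨w₀, hw₀⟩ := exists_D3_ne (R₁ x) (R₂ x) hr0 hns
    -- skewness and bilinearity inputs for W3_eq
    have sk1 : ∀ u w, extd ω₁ x u w = - extd ω₁ x w u := fun u w => extd_skew _ x u w
    have sk2 : ∀ u w, extd ω₂ x u w = - extd ω₂ x w u := fun u w => extd_skew _ x u w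
    have ad1 : ∀ u u' w, extd ω₁ x (u + u') w = extd ω₁ x u w + extd ω₁ x u' w :=
      fun u u' w => extd_add_left ω₁ h₁ x u u' w
    have ad2 : ∀ u u' w, extd ω₂ x (u + u') w = extd ω₂ x u w + extd ω₂ x u' w :=
      fun u u' w => extd_add_left ω₂ h₂ x u u' w
    have sm1 : ∀ (c : ℝ) u w, extd ω₁ x (c • u) w = c * extd ω₁ x u w :=
      fun c u w => extd_smul_left ω₁ h₁ c x u w
    have sm2 : ∀ (c : ℝ) u w, extd ω₂ x (c • u) w = c * extd ω₂ x u w :=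
      fun c u w => extd_smul_left ω₂ h₂ c x u w
    -- the two 3-form identities
    have hν : ∀ w, W3 (ω₂ x) (extd ω₂ x) (R₁ x) (R₂ x) w
        - W3 (ω₁ x) (extd ω₁ x) (R₁ x) (R₂ x) w = 0 := by
      intro w
      simp only [W3]
      rw [hBs w, hAr w, hAr (R₂ x), hβ, hα, hBrs]
      have := round2 w
      linarith
    have hμ : ∀ w, W3 (ω₁ x) (extd ω₂ x) (R₁ x) (R₂ x) w
        + W3 (ω₂ x) (extd ω₁ x) (R₁ x) (R₂ x) w = 0 := by
      intro w
      simp only [W3]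
      rw [hBs w, hAr w, hAr (R₂ x), hα, hβ, hBrs]
      have h2 := round2 w
      have hBrw : extd ω₂ x (R₁ x) w = - extd ω₁ x (R₂ x) w := by linarith
      rw [hBrw]
      linear_combination (extd ω₁ x (R₂ x) w) * round1
    -- deduce equality of the global coefficients
    obtain ⟨Kaa, W11⟩ : ∃ K, ∀ u v' w, W3 (ω₁ x) (extd ω₁ x) u v' w = K * D3 u v' w :=
      ⟨_, fun u v' w => W3_eq _ _ sk1 ad1 sm1 u v' w⟩
    obtain ⟨Kbb, W22⟩ : ∃ K, ∀ u v' w, W3 (ω₂ x) (extd ω₂ x) u v' w = K * D3 u v' w :=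
      ⟨_, fun u v' w => W3_eq _ _ sk2 ad2 sm2 u v' w⟩
    obtain ⟨Kab, W12⟩ : ∃ K, ∀ u v' w, W3 (ω₁ x) (extd ω₂ x) u v' w = K * D3 u v' w :=
      ⟨_, fun u v' w => W3_eq _ _ sk2 ad2 sm2 u v' w⟩
    obtain ⟨Kba, W21⟩ : ∃ K, ∀ u v' w, W3 (ω₂ x) (extd ω₁ x) u v' w = K * D3 u v' w :=
      ⟨_, fun u v' w => W3_eq _ _ sk1 ad1 sm1 u v' w⟩
    have hK1 : Kbb = Kaa := by
      have hh := hν w₀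
      rw [W22, W11] at hh
      have h' : (Kbb - Kaa) * D3 (R₁ x) (R₂ x) w₀ = 0 := by linarith
      rcases mul_eq_zero.mp h' with h | h
      · linarith
      · exact absurd h hw₀
    have hK2 : Kab + Kba = 0 := by
      have hh := hμ w₀
      rw [W12, W21] at hh
      have h' : (Kab + Kba) * D3 (R₁ x) (R₂ x) w₀ = 0 := by linarith
      rcases mul_eq_zero.mp h' with h | h
      · exact h
      · exact absurd h hw₀
    -- conclude
    rw [key ω₁ ω₂ h₁ h₂ l₁ l₂ x, wedge12_W3 _ _ (extd_skew _ x)]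
    rw [W11, W22, W12, W21]
    linear_combination (Kaa * D3 (v 0) (v 1) (v 2)) * hl
      + (l₂ ^ 2 * D3 (v 0) (v 1) (v 2)) * hK1
      + (l₁ * l₂ * D3 (v 0) (v 1) (v 2)) * hK2
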